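/- arXiv:2011.12788 — 2 statements merged into one kernel-verified Lean document; each statement's English description precedes it below -/
import Mathlib

section
/- Let B be a nondegenerate symmetric bilinear form on ℝⁿ and let g ∈ GL(n,ℝ) preserve B, i while B(gu, gv) = B(u,v) for all u, v. Then B(u, v) = 0 for all u ∈ A⁺(g) and all v ∈ D⁺(g); in particular A⁺(g) is a totally B-isotropic subspace. -/
open Matrix

noncomputable section

namespace AMS

/-- The group of invertible affine transformations of ℝⁿ. -/
abbrev Aff (n : ℕ) := (Fin n → ℝ) ≃ᵃ[ℝ] (Fin n → ℝ)

variable {n : ℕ}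

/-- A subgroup of `Aff n` acts properly discontinuously on ℝⁿ if for every compact set `K`
the set of elements of the subgroup moving `K` to a set meeting `K` is finite. -/
def ProperlyDiscontinuous (Γ : Subgroup (Aff n)) : Prop :=
  ∀ K : Set (Fin n → ℝ), IsCompact K →
    {γ : Aff n | γ ∈ Γ ∧ ((γ '' K) ∩ K).Nonempty}.Finite

/-- A subgroup of `Aff n` is crystallographic if it acts properly discontinuously and
cocompactly (the orbit of some compact set is all of ℝⁿ, equivalently the orbit space
is compact). -/
def IsCrystallographic (Γ : Subgroup (Aff n)) : Prop :=
  ProperlyDiscontinuous Γ ∧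
    ∃ K : Set (Fin n → ℝ), IsCompact K ∧ (⋃ γ ∈ Γ, (γ : Aff n) '' K) = Set.univ

/-- The coordinatewise complexification map ℝⁿ → ℂⁿ, as an ℝ-linear map. -/
def cpx (n : ℕ) : (Fin n → ℝ) →ₗ[ℝ] (Fin n → ℂ) where
  toFun v := fun i => (v i : ℂ)
  map_add' u v := by funext i; simp
  map_smul' c v := by funext i; simp [Complex.ofReal_mul]

/-- The complexification of a real `n × n` matrix, as a ℂ-linear endomorphism of ℂⁿ. -/
def cEnd (M : Matrix (Fin n) (Fin n) ℝ) : Module.End ℂ (Fin n → ℂ) :=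
  (M.map Complex.ofReal).mulVecLin

/-- The sum, over all complex eigenvalues `μ` satisfying the predicate `P`, of the
generalized eigenspaces of (the complexification of) `M` in ℂⁿ. -/
def genSum (M : Matrix (Fin n) (Fin n) ℝ) (P : ℂ → Prop) : Submodule ℂ (Fin n → ℂ) :=
  ⨆ μ ∈ {μ : ℂ | P μ}, (cEnd M).maxGenEigenspace μ

/-- `A⁺(g)`: the real points of the sum of the generalized eigenspaces for `|λ| > 1`. -/
def Aplus (M : Matrix (Fin n) (Fin n) ℝ) : Submodule ℝ (Fin n → ℝ) :=
  ((genSum M fun μ => 1 < ‖μ‖).restrictScalars ℝ).comap (cpx n)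

/-- `A⁻(g)`: the real points of the sum of the generalized eigenspaces for `|λ| < 1`. -/
def Aminus (M : Matrix (Fin n) (Fin n) ℝ) : Submodule ℝ (Fin n → ℝ) :=
  ((genSum M fun μ => ‖μ‖ < 1).restrictScalars ℝ).comap (cpx n)

/-- `A⁰(g)`: the real points of the sum of the generalized eigenspaces for `|λ| = 1`. -/
def Azero (M : Matrix (Fin n) (Fin n) ℝ) : Submodule ℝ (Fin n → ℝ) :=
  ((genSum M fun μ => ‖μ‖ = 1).restrictScalars ℝ).comap (cpx n)

/-- `D⁺(g) = A⁺(g) + A⁰(g)`. -/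
def Dplus (M : Matrix (Fin n) (Fin n) ℝ) : Submodule ℝ (Fin n → ℝ) := Aplus M ⊔ Azero M

/-- `D⁻(g) = A⁻(g) + A⁰(g)`. -/
def Dminus (M : Matrix (Fin n) (Fin n) ℝ) : Submodule ℝ (Fin n → ℝ) := Aminus M ⊔ Azero M

end AMS

/-!
If `g` preserves `B`, then generalized eigenvectors of `g` for eigenvalues `λ`, `μ` with `λ μ ≠ 1`
are `B`-orthogonal: by induction on their heights, `B x y = λ μ B x y` modulo pairings of lower
height. This holds for the complex-bilinear extension of `B` to ℂⁿ, hence for the real points.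
When `|λ| > 1` and `|μ| ≥ 1` one has `|λ μ| > 1`, so `λ μ ≠ 1`.
-/

section InvariantForm

variable {K V : Type*} [CommRing K] [NoZeroDivisors K] [AddCommGroup V] [Module K V]
  {B : LinearMap.BilinForm K V} {G : Module.End K V}

theorem LinearMap.BilinForm.apply_eq_zero_of_pow_sub_smul_apply_eq_zero
    (hG : ∀ x y, B (G x) (G y) = B x y) {l m : K} (hlm : l * m ≠ 1) {a b : ℕ} {x y : V}
    (hx : ((G - l • 1) ^ a) x = 0) (hy : ((G - m • 1) ^ b) y = 0) : B x y = 0 := by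
  induction a generalizing x b y with
  | zero => simp_all
  | succ a iha =>
    induction b generalizing y with
    | zero => simp_all
    | succ b ihb =>
      have hx' : ((G - l • 1) ^ a) ((G - l • 1) x) = 0 := by
        rwa [pow_succ, Module.End.mul_apply] at hx
      have hy' : ((G - m • 1) ^ b) ((G - m • 1) y) = 0 := by
        rwa [pow_succ, Module.End.mul_apply] at hy
      have hGx : G x = l • x + (G - l • 1) x := by simp
      have hGy : G y = m • y + (G - m • 1) y := by simp
      have key : B x y = l * m * B x y := by
        conv_lhs => rw [← hG, hGx, hGy]
        simp only [map_add, map_smul, LinearMap.add_apply, LinearMap.smul_apply, smul_eq_mul,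
          ihb hy', iha hx' hy, iha hx' hy', mul_zero, add_zero]
        ring
      have : (1 - l * m) * B x y = 0 := by linear_combination key
      exact (mul_eq_zero.mp this).resolve_left (sub_ne_zero.mpr hlm.symm)

theorem LinearMap.BilinForm.apply_eq_zero_of_mem_maxGenEigenspace
    (hG : ∀ x y, B (G x) (G y) = B x y) {l m : K} (hlm : l * m ≠ 1) {x y : V}
    (hx : x ∈ G.maxGenEigenspace l) (hy : y ∈ G.maxGenEigenspace m) : B x y = 0 := by
  obtain ⟨a, ha⟩ := (G.mem_maxGenEigenspace l x).mp hx
  obtain ⟨b, hb⟩ := (G.mem_maxGenEigenspace m y).mp hy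
  exact apply_eq_zero_of_pow_sub_smul_apply_eq_zero hG hlm ha hb

theorem LinearMap.BilinForm.apply_eq_zero_of_mem_iSup_maxGenEigenspace
    (hG : ∀ x y, B (G x) (G y) = B x y) {P Q : K → Prop}
    (hPQ : ∀ l m, P l → Q m → l * m ≠ 1) {x y : V}
    (hx : x ∈ ⨆ l ∈ {l | P l}, G.maxGenEigenspace l)
    (hy : y ∈ ⨆ m ∈ {m | Q m}, G.maxGenEigenspace m) : B x y = 0 := by
  suffices h : (⨆ l ∈ {l | P l}, G.maxGenEigenspace l) ≤ LinearMap.ker (B.flip y) from h hx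
  refine iSup₂_le fun l hl x' hx' => ?_
  suffices h : (⨆ m ∈ {m | Q m}, G.maxGenEigenspace m) ≤ LinearMap.ker (B x') from h hy
  exact iSup₂_le fun m hm y' hy' =>
    apply_eq_zero_of_mem_maxGenEigenspace hG (hPQ l m hl hm) hx' hy'

end InvariantForm

theorem LinearMap.transpose_mul_toMatrix₂'_mul_eq {ι R : Type*} [Fintype ι] [DecidableEq ι]
    [CommSemiring R]
    {B : LinearMap.BilinForm R (ι → R)} {g : Matrix ι ι R}
    (hg : ∀ u v, B (g *ᵥ u) (g *ᵥ v) = B u v) :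
    gᵀ * LinearMap.toMatrix₂' R B * g = LinearMap.toMatrix₂' R B := by
  have hB : B.compl₁₂ (Matrix.toLin' g) (Matrix.toLin' g) = B := LinearMap.ext₂ hg
  have h := LinearMap.toMatrix₂'_compl₁₂ B (Matrix.toLin' g) (Matrix.toLin' g)
  rwa [hB, LinearMap.toMatrix'_toLin', eq_comm] at h

theorem mul_ne_one_of_one_lt_norm {𝕜 : Type*} [NormedDivisionRing 𝕜] {l m : 𝕜} (hl : 1 < ‖l‖)
    (hm : 1 ≤ ‖m‖) : l * m ≠ 1 := by
  intro h
  have : ‖l‖ * ‖m‖ = 1 := by rw [← norm_mul, h, norm_one]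
  nlinarith

namespace AMS

variable {n : ℕ}

def cForm (B : LinearMap.BilinForm ℝ (Fin n → ℝ)) : LinearMap.BilinForm ℂ (Fin n → ℂ) :=
  Matrix.toLinearMap₂' ℂ ((LinearMap.toMatrix₂' ℝ B).map Complex.ofReal)

theorem cForm_cpx (B : LinearMap.BilinForm ℝ (Fin n → ℝ)) (u v : Fin n → ℝ) :
    cForm B (cpx n u) (cpx n v) = B u v := by
  conv_rhs => rw [← Matrix.toLinearMap₂'_toMatrix' (R := ℝ) B]
  rw [cForm, Matrix.toLinearMap₂'_apply, Matrix.toLinearMap₂'_apply]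
  push_cast
  simp [cpx]

theorem cForm_cEnd {B : LinearMap.BilinForm ℝ (Fin n → ℝ)} {g : Matrix (Fin n) (Fin n) ℝ}
    (hg : ∀ u v, B (g *ᵥ u) (g *ᵥ v) = B u v) (x y : Fin n → ℂ) :
    cForm B (cEnd g x) (cEnd g y) = cForm B x y := by
  have hmul : ∀ P Q : Matrix (Fin n) (Fin n) ℝ,
      (P * Q).map Complex.ofReal = P.map Complex.ofReal * Q.map Complex.ofReal :=
    fun _ _ => Matrix.map_mul (f := Complex.ofRealHom)
  have h := congrArg (Matrix.map · Complex.ofReal) (LinearMap.transpose_mul_toMatrix₂'_mul_eq hg)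
  simp only [hmul, Matrix.transpose_map] at h
  conv_rhs => rw [cForm, ← h, ← Matrix.toLinearMap₂'_comp]
  rfl

theorem apply_eq_zero_of_cpx_mem_genSum {B : LinearMap.BilinForm ℝ (Fin n → ℝ)}
    {g : Matrix (Fin n) (Fin n) ℝ} (hg : ∀ u v, B (g *ᵥ u) (g *ᵥ v) = B u v)
    {P Q : ℂ → Prop} (hPQ : ∀ l m, P l → Q m → l * m ≠ 1) {u v : Fin n → ℝ}
    (hu : cpx n u ∈ genSum g P) (hv : cpx n v ∈ genSum g Q) : B u v = 0 := by
  have h :=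
    LinearMap.BilinForm.apply_eq_zero_of_mem_iSup_maxGenEigenspace (cForm_cEnd hg) hPQ hu hv
  rwa [cForm_cpx, Complex.ofReal_eq_zero] at h

theorem Aplus_isotropic_general (n : ℕ) (B : LinearMap.BilinForm ℝ (Fin n → ℝ))
    (g : GL (Fin n) ℝ)
    (hg : ∀ u v : Fin n → ℝ,
      B ((g : Matrix (Fin n) (Fin n) ℝ).mulVec u) ((g : Matrix (Fin n) (Fin n) ℝ).mulVec v)
        = B u v) :
    (∀ u ∈ Aplus (g : Matrix (Fin n) (Fin n) ℝ),
      ∀ v ∈ Dplus (g : Matrix (Fin n) (Fin n) ℝ), B u v = 0) ∧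
    (∀ u ∈ Aplus (g : Matrix (Fin n) (Fin n) ℝ),
      ∀ v ∈ Aplus (g : Matrix (Fin n) (Fin n) ℝ), B u v = 0) := by
  have hD : ∀ u ∈ Aplus (g : Matrix (Fin n) (Fin n) ℝ),
      ∀ v ∈ Dplus (g : Matrix (Fin n) (Fin n) ℝ), B u v = 0 := by
    intro u hu v hv
    obtain ⟨a, ha, c, hc, rfl⟩ := Submodule.mem_sup.mp hv
    rw [map_add, apply_eq_zero_of_cpx_mem_genSum hg
        (fun _ _ hl hm => mul_ne_one_of_one_lt_norm hl hm.le) hu ha,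
      apply_eq_zero_of_cpx_mem_genSum hg
        (fun _ _ hl hm => mul_ne_one_of_one_lt_norm hl hm.ge) hu hc, add_zero]
  exact ⟨hD, fun u hu v hv => hD u hu v (le_sup_left (a := Aplus _) hv)⟩

/-- If `B` is a nondegenerate symmetric bilinear form on ℝⁿ preserved by `g ∈ GL(n,ℝ)`,
then `B(u,v) = 0` for all `u ∈ A⁺(g)` and `v ∈ D⁺(g)`; in particular `A⁺(g)` is totally
`B`-isotropic. -/
theorem Aplus_isotropic (n : ℕ) (B : LinearMap.BilinForm ℝ (Fin n → ℝ))
    (hBnd : B.Nondegenerate) (hBsymm : ∀ u v : Fin n → ℝ, B u v = B v u)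
    (g : GL (Fin n) ℝ)
    (hg : ∀ u v : Fin n → ℝ,
      B ((g : Matrix (Fin n) (Fin n) ℝ).mulVec u) ((g : Matrix (Fin n) (Fin n) ℝ).mulVec v)
        = B u v) :
    (∀ u ∈ Aplus (g : Matrix (Fin n) (Fin n) ℝ),
      ∀ v ∈ Dplus (g : Matrix (Fin n) (Fin n) ℝ), B u v = 0) ∧
    (∀ u ∈ Aplus (g : Matrix (Fin n) (Fin n) ℝ),
      ∀ v ∈ Aplus (g : Matrix (Fin n) (Fin n) ℝ), B u v = 0) :=
  Aplus_isotropic_general n B g hg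

end AMS
end
end

section
/- Let g ∈ Aff(ℝⁿ) be an affine transformation whose linear part l(g) satisfies ker(l(g) − I) ∩ im(l(g) − I) = {0} (this holds in particular when l(g) is semisimple). Suppose L₁ and L₂ are g-invariant affine lines on which g acts as a translation, i.e. there are vectors t₁, t₂ with g p = p + tᵢ for every p ∈ Lᵢ (i = 1, 2). Then t₁ = t₂; in particular, if this common vector is nonzero then all such invariant lines are parallel to it. -/
/-!
The displacement `f p -ᵥ p` of an affine map changes from point to point by elements of
`range (l(f) - 1)`. On an invariant line translated by `f`, the displacement `t` is also fixed by `l(f)`,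
because `f` moves `f p` by `t` as well, so `t ∈ ker (l(f) - 1)`. Two such displacements therefore
differ by a vector of `ker (l(f) - 1) ⊓ range (l(f) - 1) = 0`.
-/

noncomputable section

namespace AffineMap

variable {k V P : Type*} [Ring k] [AddCommGroup V] [Module k V] [AddTorsor V P]

theorem vsub_sub_vsub_eq_linear_sub_id (f : P →ᵃ[k] P) (p₁ p₂ : P) :
    (f p₁ -ᵥ p₁) - (f p₂ -ᵥ p₂) = (f.linear - LinearMap.id : V →ₗ[k] V) (p₁ -ᵥ p₂) := by
  rw [LinearMap.sub_apply, linearMap_vsub, LinearMap.id_apply, vsub_sub_vsub_comm]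

theorem vsub_mem_ker_linear_sub_id {f : P →ᵃ[k] P} {p : P}
    (h : f (f p) -ᵥ f p = f p -ᵥ p) :
    f p -ᵥ p ∈ LinearMap.ker (f.linear - LinearMap.id) := by
  rw [LinearMap.mem_ker, LinearMap.sub_apply, linearMap_vsub, h, LinearMap.id_apply, sub_self]

theorem vsub_eq_vsub_of_ker_inf_range_eq_bot {f : P →ᵃ[k] P}
    (hf : LinearMap.ker (f.linear - LinearMap.id) ⊓ LinearMap.range (f.linear - LinearMap.id) = ⊥)
    {p₁ p₂ : P} (h₁ : f (f p₁) -ᵥ f p₁ = f p₁ -ᵥ p₁) (h₂ : f (f p₂) -ᵥ f p₂ = f p₂ -ᵥ p₂) :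
    f p₁ -ᵥ p₁ = f p₂ -ᵥ p₂ := by
  have hker : (f p₁ -ᵥ p₁) - (f p₂ -ᵥ p₂) ∈ LinearMap.ker (f.linear - LinearMap.id) :=
    sub_mem (vsub_mem_ker_linear_sub_id h₁) (vsub_mem_ker_linear_sub_id h₂)
  have hrange : (f p₁ -ᵥ p₁) - (f p₂ -ᵥ p₂) ∈ LinearMap.range (f.linear - LinearMap.id) :=
    ⟨p₁ -ᵥ p₂, (vsub_sub_vsub_eq_linear_sub_id f p₁ p₂).symm⟩
  have hbot := hf ▸ Submodule.mem_inf.mpr ⟨hker, hrange⟩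
  exact sub_eq_zero.mp ((Submodule.mem_bot k).mp hbot)

end AffineMap

namespace AMS

theorem translation_vector_unique_general (n : ℕ) (g : Aff n)
    (hss : LinearMap.ker ((g.linear : (Fin n → ℝ) →ₗ[ℝ] (Fin n → ℝ)) - LinearMap.id) ⊓
        LinearMap.range ((g.linear : (Fin n → ℝ) →ₗ[ℝ] (Fin n → ℝ)) - LinearMap.id) = ⊥)
    (p₁ p₂ d₁ d₂ t₁ t₂ : Fin n → ℝ)
    (L₁ : Set (Fin n → ℝ)) (hL₁ : L₁ = {x | ∃ s : ℝ, x = p₁ + s • d₁})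
    (L₂ : Set (Fin n → ℝ)) (hL₂ : L₂ = {x | ∃ s : ℝ, x = p₂ + s • d₂})
    (hinv₁ : g '' L₁ = L₁) (hinv₂ : g '' L₂ = L₂)
    (htr₁ : ∀ x ∈ L₁, g x = x + t₁) (htr₂ : ∀ x ∈ L₂, g x = x + t₂) :
    t₁ = t₂ := by
  have displacement_eq {L : Set (Fin n → ℝ)} {p t : Fin n → ℝ} (hp : p ∈ L) (hinv : g '' L = L)
      (htr : ∀ x ∈ L, g x = x + t) :
      g (g p) -ᵥ g p = t ∧ g p -ᵥ p = t := by
    have hgp : g p ∈ L := hinv ▸ Set.mem_image_of_mem g hp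
    exact ⟨by rw [vsub_eq_sub, htr _ hgp, add_sub_cancel_left],
      by rw [vsub_eq_sub, htr _ hp, add_sub_cancel_left]⟩
  obtain ⟨hgg₁, hg₁⟩ := displacement_eq (hL₁ ▸ ⟨0, by simp⟩ : p₁ ∈ L₁) hinv₁ htr₁
  obtain ⟨hgg₂, hg₂⟩ := displacement_eq (hL₂ ▸ ⟨0, by simp⟩ : p₂ ∈ L₂) hinv₂ htr₂
  rw [← hg₁, ← hg₂]
  exact AffineMap.vsub_eq_vsub_of_ker_inf_range_eq_bot (f := g.toAffineMap)
    (by rwa [AffineEquiv.linear_toAffineMap]) (hgg₁.trans hg₁.symm) (hgg₂.trans hg₂.symm)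

/-- Let `g` be an invertible affine transformation of ℝⁿ whose linear part `A` satisfies
`ker(A − I) ∩ im(A − I) = {0}`. If `L₁`, `L₂` are `g`-invariant affine lines on which `g`
acts as translation by vectors `t₁`, `t₂` respectively, then `t₁ = t₂`. -/
theorem translation_vector_unique (n : ℕ) (g : Aff n)
    (hss : LinearMap.ker ((g.linear : (Fin n → ℝ) →ₗ[ℝ] (Fin n → ℝ)) - LinearMap.id) ⊓
        LinearMap.range ((g.linear : (Fin n → ℝ) →ₗ[ℝ] (Fin n → ℝ)) - LinearMap.id) = ⊥)
    (p₁ p₂ d₁ d₂ t₁ t₂ : Fin n → ℝ) (hd₁ : d₁ ≠ 0) (hd₂ : d₂ ≠ 0)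
    (L₁ : Set (Fin n → ℝ)) (hL₁ : L₁ = {x | ∃ s : ℝ, x = p₁ + s • d₁})
    (L₂ : Set (Fin n → ℝ)) (hL₂ : L₂ = {x | ∃ s : ℝ, x = p₂ + s • d₂})
    (hinv₁ : g '' L₁ = L₁) (hinv₂ : g '' L₂ = L₂)
    (htr₁ : ∀ x ∈ L₁, g x = x + t₁) (htr₂ : ∀ x ∈ L₂, g x = x + t₂) :
    t₁ = t₂ :=
  translation_vector_unique_general n g hss p₁ p₂ d₁ d₂ t₁ t₂ L₁ hL₁ L₂ hL₂ hinv₁ hinv₂ htr₁ htr₂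

end AMS
end
end
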